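/- For a central extension 1 → N → G → H → 1 there is an exact sequence 1 → Aut^{N,H}(G) → Aut_N(G) →^τ Aut(N) × Aut(H) →^λ H²(H, N), where λ(θ,φ) = [μ(φ(·),φ(·))·θ(μ(·,·))⁻¹]: a pair (θ,φ) is induced by an automorphism of G normalizing N if and only if λ(θ,φ) = 1. -/

import Mathlib

/-!
Every `g : G` is `t ḡ * n` for a unique `n ∈ N`, and as `N` is central,
`(t x * n) * (t y * m) = t (x * y) * (μ x y * n * m)`. An automorphism `γ` inducing `(θ, φ)`
gives the cochain `χ x = (t (φ x))⁻¹ * γ (t x) ∈ N`, and applying `γ` to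
`t x * t y = t (x * y) * μ x y` shows that `χ` trivialises `μ (φ ·) (φ ·) * θ (μ · ·)⁻¹`.
Conversely such a `χ` defines the endomorphism `t x * n ↦ t (φ x) * χ x * θ n`, which is
bijective by the five lemma, since it restricts to `θ` on `N` and induces `φ` on `G ⧸ N`.
-/

open QuotientGroup Subgroup

theorem MonoidHom.bijective_of_mulEquiv_of_mulEquiv_quotient {G G' : Type*} [Group G] [Group G']
    {N : Subgroup G} {N' : Subgroup G'} [N.Normal] [N'.Normal] (f : G →* G')
    (θ : N ≃* N') (φ : G ⧸ N ≃* G' ⧸ N')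
    (hθ : ∀ n : N, f n = θ n) (hφ : ∀ g : G, (f g : G' ⧸ N') = φ (g : G ⧸ N)) :
    Function.Bijective f := by
  refine ⟨(injective_iff_map_eq_one f).mpr fun g hg => ?_, fun g' => ?_⟩
  · have hgN : g ∈ N := by
      rw [← eq_one_iff, ← map_eq_one_iff φ φ.injective, ← hφ, hg, QuotientGroup.mk_one]
    have : θ ⟨g, hgN⟩ = 1 := Subtype.ext ((hθ _).symm.trans hg)
    exact congrArg Subtype.val ((map_eq_one_iff θ θ.injective).mp this)
  · obtain ⟨⟨g⟩, hg⟩ := φ.surjective g'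
    have hmem : (f g)⁻¹ * g' ∈ N' := QuotientGroup.eq.mp ((hφ g).trans hg)
    refine ⟨g * θ.symm ⟨_, hmem⟩, ?_⟩
    rw [map_mul, hθ, MulEquiv.apply_symm_apply, mul_inv_cancel_left]

theorem mul_inv_eq_inv_mul_inv_mul_iff_of_mem_center {G : Type*} [Group G] {m a b c d : G}
    (ha : a ∈ center G) (hb : b ∈ center G) :
    m * d⁻¹ = a⁻¹ * b⁻¹ * c ↔ m * a * b = c * d := by
  have hab : m * a * b = a * b * m := by
    rw [mul_assoc, ← (mem_center_iff.mp (mul_mem ha hb)) m]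
  rw [mul_inv_eq_iff_eq_mul, hab, mul_assoc, ← eq_inv_mul_iff_mul_eq, mul_inv_rev,
    (mem_center_iff.mp (inv_mem hb)) a⁻¹]

section CentralExtension

variable {G : Type*} [Group G] {N : Subgroup G}

def transversalOffset (t : G ⧸ N → G) (ht : ∀ x : G ⧸ N, (t x : G ⧸ N) = x) (g : G) : N :=
  ⟨(t g)⁻¹ * g, QuotientGroup.eq.mp (ht g)⟩

variable (t : G ⧸ N → G) (ht : ∀ x : G ⧸ N, (t x : G ⧸ N) = x)

theorem mul_transversalOffset (g : G) : t g * transversalOffset t ht g = g :=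
  mul_inv_cancel_left _ _

theorem transversalOffset_of_mem [N.Normal] (ht1 : t 1 = 1) {n : G} (hn : n ∈ N) :
    (transversalOffset t ht n : G) = n := by
  simp [transversalOffset, (eq_one_iff n).mpr hn, ht1]

theorem transversalOffset_one [N.Normal] (ht1 : t 1 = 1) : transversalOffset t ht 1 = 1 :=
  Subtype.ext (transversalOffset_of_mem t ht ht1 N.one_mem)

theorem transversalOffset_mul [N.Normal] (hZ : N ≤ center G) (μ : G ⧸ N → G ⧸ N → N)
    (hμ : ∀ x y : G ⧸ N, t (x * y) * (μ x y : G) = t x * t y) (g h : G) :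
    (transversalOffset t ht (g * h) : G) =
      μ g h * transversalOffset t ht g * transversalOffset t ht h := by
  have hcomm := mem_center_iff.mp (hZ (transversalOffset t ht g).2) (t h)
  refine inv_mul_eq_iff_eq_mul.mpr ?_
  calc g * h = t g * transversalOffset t ht g * (t h * transversalOffset t ht h) := by
        rw [mul_transversalOffset, mul_transversalOffset]
    _ = t g * t h * (transversalOffset t ht g * transversalOffset t ht h) := by
        rw [mul_assoc (t g), ← mul_assoc _ (t h), ← hcomm]; group
    _ = t (g * h) * (μ g h * transversalOffset t ht g * transversalOffset t ht h) := by
        rw [← hμ]; group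

variable [N.Normal] (μ : G ⧸ N → G ⧸ N → N)

/-- The multiplicative form of `μ (φ x) (φ y) * θ (μ x y)⁻¹ = χ x⁻¹ * χ y⁻¹ * χ (x * y)`:
`χ` witnesses that the class `λ(θ, φ)` vanishes. -/
def IsLiftingCochain (θ : N →* N) (φ : G ⧸ N →* G ⧸ N) (χ : G ⧸ N → N) : Prop :=
  ∀ x y : G ⧸ N, (μ (φ x) (φ y) : G) * χ x * χ y = χ (x * y) * θ (μ x y)

theorem isLiftingCochain_iff (hZ : N ≤ center G) (θ : N →* N) (φ : G ⧸ N →* G ⧸ N)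
    (χ : G ⧸ N → N) :
    IsLiftingCochain μ θ φ χ ↔ ∀ x y : G ⧸ N,
      (μ (φ x) (φ y) : G) * (θ (μ x y) : G)⁻¹ = (χ x : G)⁻¹ * (χ y : G)⁻¹ * χ (x * y) :=
  forall₂_congr fun x y =>
    (mul_inv_eq_inv_mul_inv_mul_iff_of_mem_center (hZ (χ x).2) (hZ (χ y).2)).symm

theorem isLiftingCochain_transversalOffset_comp (hZ : N ≤ center G)
    (hμ : ∀ x y : G ⧸ N, t (x * y) * (μ x y : G) = t x * t y)
    (θ : N →* N) (φ : G ⧸ N →* G ⧸ N) (γ : G →* G)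
    (hγθ : ∀ n : N, γ n = θ n) (hγφ : ∀ g : G, (γ g : G ⧸ N) = φ g) :
    IsLiftingCochain μ θ φ fun x => transversalOffset t ht (γ (t x)) := by
  intro x y
  have hγt : ∀ x, t (φ x) * transversalOffset t ht (γ (t x)) = γ (t x) := fun x => by
    conv_rhs => rw [← mul_transversalOffset t ht (γ (t x))]
    rw [hγφ, ht]
  have hcomm := mem_center_iff.mp (hZ (transversalOffset t ht (γ (t x))).2) (t (φ y))
  refine mul_left_cancel (a := t (φ (x * y))) ?_
  calc t (φ (x * y)) * ((μ (φ x) (φ y) : G) * transversalOffset t ht (γ (t x)) *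
          transversalOffset t ht (γ (t y)))
      = t (φ x) * t (φ y) *
          (transversalOffset t ht (γ (t x)) * transversalOffset t ht (γ (t y))) := by
        rw [map_mul, ← hμ]; group
    _ = t (φ x) * (t (φ y) * transversalOffset t ht (γ (t x))) *
          transversalOffset t ht (γ (t y)) := by group
    _ = t (φ x) * transversalOffset t ht (γ (t x)) *
          (t (φ y) * transversalOffset t ht (γ (t y))) := by rw [hcomm]; group
    _ = γ (t (x * y)) * θ (μ x y) := by rw [hγt, hγt, ← map_mul, ← hμ, map_mul, hγθ]
    _ = t (φ (x * y)) * (transversalOffset t ht (γ (t (x * y))) * θ (μ x y)) := by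
        rw [← mul_assoc, hγt]

def liftOfCochain (θ : N →* N) (φ : G ⧸ N →* G ⧸ N) (χ : G ⧸ N → N) (g : G) : G :=
  t (φ g) * (χ g * θ (transversalOffset t ht g))

theorem mk_liftOfCochain (θ : N →* N) (φ : G ⧸ N →* G ⧸ N) (χ : G ⧸ N → N) (g : G) :
    ((liftOfCochain t ht θ φ χ g : G) : G ⧸ N) = φ g := by
  have hN : (((χ g : G) * θ (transversalOffset t ht g) : G) : G ⧸ N) = 1 :=
    (eq_one_iff _).mpr (mul_mem (χ g).2 (θ _).2)
  rw [liftOfCochain, QuotientGroup.mk_mul, ht, hN, mul_one]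

theorem liftOfCochain_coe (ht1 : t 1 = 1) (θ : N →* N) (φ : G ⧸ N →* G ⧸ N)
    (χ : G ⧸ N → N) (hχ1 : χ 1 = 1) (n : N) :
    liftOfCochain t ht θ φ χ n = θ n := by
  have hn : (n : G ⧸ N) = 1 := (eq_one_iff _).mpr n.2
  have hoff : transversalOffset t ht n = n := Subtype.ext (transversalOffset_of_mem t ht ht1 n.2)
  rw [liftOfCochain, hn, map_one, ht1, hχ1, hoff, one_mul, OneMemClass.coe_one, one_mul]

theorem liftOfCochain_mul (hZ : N ≤ center G)
    (hμ : ∀ x y : G ⧸ N, t (x * y) * (μ x y : G) = t x * t y)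
    (θ : N →* N) (φ : G ⧸ N →* G ⧸ N) (χ : G ⧸ N → N)
    (hχ : IsLiftingCochain μ θ φ χ) (g h : G) :
    liftOfCochain t ht θ φ χ (g * h) =
      liftOfCochain t ht θ φ χ g * liftOfCochain t ht θ φ χ h := by
  have hoff : transversalOffset t ht (g * h) =
      μ g h * transversalOffset t ht g * transversalOffset t ht h :=
    Subtype.ext (transversalOffset_mul t ht hZ μ hμ g h)
  have hcomm₁ := mem_center_iff.mp (hZ (θ (transversalOffset t ht g)).2) (χ h)
  have hcomm₂ := mem_center_iff.mp
    (hZ (mul_mem (χ g).2 (θ (transversalOffset t ht g)).2)) (t (φ h))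
  simp only [liftOfCochain, QuotientGroup.mk_mul, hoff, map_mul, coe_mul]
  calc t (φ g * φ h) * (χ (g * h) * (θ (μ g h) * θ (transversalOffset t ht g) *
          θ (transversalOffset t ht h)))
      = t (φ g * φ h) * (χ (g * h) * θ (μ g h) : G) *
          (θ (transversalOffset t ht g) * θ (transversalOffset t ht h)) := by group
    _ = t (φ g * φ h) * (μ (φ g) (φ h) * χ g * χ h : G) *
          (θ (transversalOffset t ht g) * θ (transversalOffset t ht h)) := by rw [hχ]
    _ = t (φ g) * t (φ h) * χ g * (χ h * θ (transversalOffset t ht g)) *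
          θ (transversalOffset t ht h) := by rw [← hμ]; group
    _ = t (φ g) * (t (φ h) * (χ g * θ (transversalOffset t ht g))) *
          (χ h * θ (transversalOffset t ht h)) := by rw [hcomm₁]; group
    _ = t (φ g) * (χ g * θ (transversalOffset t ht g)) *
          (t (φ h) * (χ h * θ (transversalOffset t ht h))) := by rw [hcomm₂]; group

end CentralExtension

/-- For a central extension 1 → N → G → H → 1, exactness of
1 → Aut^{N,H}(G) → Aut_N(G) →^τ Aut(N) × Aut(H) →^λ H²(H,N):
a pair (θ,φ) is induced by an automorphism of G normalizing N if and only if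
λ(θ,φ) = [μ(φ(·),φ(·))·θ(μ(·,·))⁻¹] is trivial, i.e. this cocycle is the
coboundary χ(x)⁻¹·χ(y)⁻¹·χ(xy) of some χ : H → N with χ(1) = 1. -/
theorem stmt_10 {G : Type*} [Group G] (N : Subgroup G) [N.Normal]
    (hZ : N ≤ Subgroup.center G)
    (t : G ⧸ N → G) (ht : ∀ x : G ⧸ N, (QuotientGroup.mk (t x) : G ⧸ N) = x)
    (ht1 : t 1 = 1)
    (μ : G ⧸ N → G ⧸ N → N)
    (hμ : ∀ x y : G ⧸ N, t (x * y) * (μ x y : G) = t x * t y)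
    (θ : N ≃* N) (φ : G ⧸ N ≃* G ⧸ N) :
    (∃ γ : G ≃* G,
        (∀ n ∈ N, γ n ∈ N) ∧
        (∀ n : N, γ n = (θ n : G)) ∧
        (∀ g : G, (QuotientGroup.mk (γ g) : G ⧸ N) = φ (QuotientGroup.mk g))) ↔
      ∃ χ : G ⧸ N → N, χ 1 = 1 ∧
        ∀ x y : G ⧸ N,
          (μ (φ x) (φ y) : G) * ((θ (μ x y) : G))⁻¹ =
            ((χ x : G))⁻¹ * ((χ y : G))⁻¹ * (χ (x * y) : G) := by
  constructor
  · rintro ⟨γ, -, hγθ, hγφ⟩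
    have hχ := isLiftingCochain_transversalOffset_comp t ht μ hZ hμ θ.toMonoidHom φ.toMonoidHom
      γ.toMonoidHom hγθ hγφ
    exact ⟨_, by simp only [ht1, map_one, transversalOffset_one t ht ht1],
      (isLiftingCochain_iff μ hZ _ _ _).mp hχ⟩
  · rintro ⟨χ, hχ1, hχ⟩
    let f : G →* G := MonoidHom.mk' (liftOfCochain t ht θ.toMonoidHom φ.toMonoidHom χ)
      (liftOfCochain_mul t ht μ hZ hμ _ _ χ ((isLiftingCochain_iff μ hZ _ _ χ).mpr hχ))
    have hfθ : ∀ n : N, f n = θ n := liftOfCochain_coe t ht ht1 _ _ χ hχ1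
    have hfφ : ∀ g : G, (f g : G ⧸ N) = φ g := mk_liftOfCochain t ht _ _ χ
    let γ := MulEquiv.ofBijective f (f.bijective_of_mulEquiv_of_mulEquiv_quotient θ φ hfθ hfφ)
    exact ⟨γ, fun n hn => (hfθ ⟨n, hn⟩).symm ▸ (θ _).2, hfθ, hfφ⟩
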